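/- arXiv:0712.2678 — 3 statements merged into one kernel-verified Lean document; each statement's English description precedes it below -/
import Mathlib

section
/- Every connected acyclic digraph of order n has at least n(n+1)/2 connected convex sets. -/
/-!
Digraphs are given by an arc relation `A : V → V → Prop` on a vertex type `V`.
A directed path from `a` to `b` is encoded as `a :: (l ++ [b])` where the list
satisfies `List.Chain A` (consecutive arcs) and `List.Nodup` (distinct vertices);
`l` is the list of internal vertices.
-/

variable {V : Type*}

/-- A non-empty vertex set `X` is convex if no directed path between two
vertices of `X` contains a vertex not in `X`. -/
def ConvexIn (A : V → V → Prop) (X : Set V) : Prop :=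
  X.Nonempty ∧ ∀ a b : V, ∀ l : List V, a ∈ X → b ∈ X →
    List.Chain A a (l ++ [b]) → (a :: (l ++ [b])).Nodup → ∀ w ∈ l, w ∈ X

/-- A vertex set is connected if the underlying undirected graph induced on it
is connected. -/
def ConnectedIn (A : V → V → Prop) (X : Set V) : Prop :=
  ((SimpleGraph.fromRel A).induce X).Connected

/-- A digraph is acyclic if it has no directed cycle, equivalently no
nontrivial directed closed walk. -/
def AcyclicDigraph (A : V → V → Prop) : Prop :=
  ∀ v, ¬ Relation.TransGen A v v

/-- A digraph is connected if its underlying undirected graph is connected. -/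
def DigraphConnected (A : V → V → Prop) : Prop :=
  (SimpleGraph.fromRel A).Connected

/-- A source is a vertex with in-degree zero. -/
def IsSourceIn (A : V → V → Prop) (v : V) : Prop := ∀ u, ¬ A u v

/-- A sink is a vertex with out-degree zero. -/
def IsSinkIn (A : V → V → Prop) (v : V) : Prop := ∀ u, ¬ A v u

/-- A cut-vertex of a connected digraph: deleting it disconnects the
underlying undirected graph. -/
def IsCutVertexIn (A : V → V → Prop) (v : V) : Prop :=
  ¬ ((SimpleGraph.fromRel A).induce {u | u ≠ v}).Connected

/-!
Call a vertex `z` of a connected vertex set `S` removable if it is a source or a sink of the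
subdigraph induced on `S` and `S \ {z}` is still connected. Then no directed path inside `S`
passes through `z`, so `S \ {z}` is convex in `S`, and connected sets convex in `S \ {z}` stay
convex in `S`.

In an acyclic digraph every connected `S` with at least two vertices has a removable vertex
other than any prescribed vertex `c`. Without cut vertices, a source and a sink of `S` are
distinct and both removable. Otherwise, for a cut vertex `d`, pick a component `K` of `S \ {d}`
avoiding `c`; by induction `K ∪ {d}` has a removable vertex `z ≠ d`, and `z` is removable in `S`
because all its neighbours in `S` lie in `K ∪ {d}`.

Repeatedly removing removable vertices other than a fixed `z` leaves connected convex sets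
containing `z` of every size `1, …, |S|`. For a removable `z` these sets are not subsets of
`S \ {z}`, so the number `f S` of connected convex subsets of `S` satisfies
`f S ≥ f (S \ {z}) + |S|`, and `f S ≥ |S| (|S| + 1) / 2` follows by induction.
-/

namespace SimpleGraph

variable {G : SimpleGraph V} {S C : Set V} {d : V}

theorem connected_induce_sdiff_of_closed (hS : (G.induce S).Connected) (hd : d ∈ S) (hdC : d ∉ C)
    (hC : ∀ x ∈ C, ∀ y ∈ S \ {d}, G.Adj x y → y ∈ C) : (G.induce (S \ C)).Connected := by
  -- a walk in `S` towards `d` cannot enter `C` before it reaches `d`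
  have toward_d : ∀ {x y : S} (p : (G.induce S).Walk x y), y.1 = d → ∀ hx : x.1 ∉ C,
      (G.induce (S \ C)).Reachable ⟨x, x.2, hx⟩ ⟨d, hd, hdC⟩ := by
    intro x y p
    induction p with
    | nil => rintro rfl _; rfl
    | @cons x v y hxv p ih =>
      intro hy hx
      by_cases hxd : x.1 = d
      · simp only [← hxd]; rfl
      have hv : v.1 ∉ C := fun hv => hx (hC v hv x ⟨x.2, hxd⟩ hxv.symm)
      exact (Adj.reachable (show (G.induce (S \ C)).Adj ⟨x, x.2, hx⟩ ⟨v, v.2, hv⟩ from hxv)).trans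
        (ih hy hv)
  refine (connected_iff_exists_forall_reachable _).2 ⟨⟨d, hd, hdC⟩, fun ⟨x, hxS, hxC⟩ => ?_⟩
  obtain ⟨p⟩ := hS.preconnected ⟨x, hxS⟩ ⟨d, hd⟩
  exact (toward_d p rfl hxC).symm

theorem exists_closed_of_not_preconnected_induce {T : Set V}
    (hT : ¬(G.induce T).Preconnected) (c : V) :
    ∃ K ⊆ T, (∀ x ∈ K, ∀ y ∈ T, G.Adj x y → y ∈ K) ∧ c ∉ K ∧ K.Nonempty ∧ (T \ K).Nonempty := by
  let comp (u : T) : Set V := {x | ∃ hx : x ∈ T, (G.induce T).Reachable u ⟨x, hx⟩}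
  have comp_sub u : comp u ⊆ T := fun x ⟨hx, _⟩ => hx
  have comp_closed u : ∀ x ∈ comp u, ∀ y ∈ T, G.Adj x y → y ∈ comp u :=
    fun x ⟨hx, hux⟩ y hy hxy => ⟨hy, hux.trans (Adj.reachable (G := G.induce T) hxy)⟩
  have self_mem (u : T) : u.1 ∈ comp u := ⟨u.2, .rfl⟩
  simp only [Preconnected, not_forall] at hT
  obtain ⟨u, v, huv⟩ := hT
  have hvu : v.1 ∉ comp u := fun ⟨_, h⟩ => huv h
  by_cases hcu : c ∈ comp u
  · refine ⟨comp v, comp_sub v, comp_closed v, fun ⟨_, hvc⟩ => ?_, ⟨v, self_mem v⟩,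
      ⟨u, u.2, fun ⟨_, hvu'⟩ => huv hvu'.symm⟩⟩
    obtain ⟨_, huc⟩ := hcu
    exact huv (huc.trans hvc.symm)
  · exact ⟨comp u, comp_sub u, comp_closed u, hcu, ⟨u, self_mem u⟩, ⟨v, v.2, hvu⟩⟩

end SimpleGraph

section

/-- Convexity inside `S` is `ConvexIn (inducedArcs A S)`: the paths of `inducedArcs A S` are the
directed paths of the subdigraph induced on `S`. -/
def inducedArcs (A : V → V → Prop) (S : Set V) (u v : V) : Prop := u ∈ S ∧ v ∈ S ∧ A u v

variable {A : V → V → Prop} {S T X K : Set V} {d z : V}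

theorem inducedArcs_univ (A : V → V → Prop) : inducedArcs A Set.univ = A := by
  ext u v; simp [inducedArcs]

theorem AcyclicDigraph.swap (hA : AcyclicDigraph A) : AcyclicDigraph (Function.swap A) :=
  fun v hv => hA v (Relation.transGen_swap.1 hv)

theorem AcyclicDigraph.exists_isSourceIn [Finite V] (hA : AcyclicDigraph A) (hS : S.Nonempty) :
    ∃ z ∈ S, IsSourceIn (inducedArcs A S) z := by
  have : IsTrans V (Relation.TransGen A) := ⟨fun _ _ _ => Relation.TransGen.trans⟩
  have : Std.Irrefl (Relation.TransGen A) := ⟨hA⟩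
  obtain ⟨z, hzS, hmin⟩ :=
    (Finite.wellFounded_of_trans_of_irrefl (Relation.TransGen A)).has_min S hS
  exact ⟨z, hzS, fun u ⟨huS, _, huz⟩ => hmin u huS (.single huz)⟩

theorem AcyclicDigraph.exists_isSinkIn [Finite V] (hA : AcyclicDigraph A) (hS : S.Nonempty) :
    ∃ z ∈ S, IsSinkIn (inducedArcs A S) z := by
  obtain ⟨z, hzS, hz⟩ := hA.swap.exists_isSourceIn hS
  exact ⟨z, hzS, fun u ⟨hzS, huS, hzu⟩ => hz u ⟨huS, hzS, hzu⟩⟩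

theorem convexIn_inducedArcs_self (hS : S.Nonempty) : ConvexIn (inducedArcs A S) S := by
  refine ⟨hS, fun a b l _ _ hab _ w hw => ?_⟩
  exact List.IsChain.cons_induction (· ∈ S) (l ++ [b]) hab (fun _ _ h _ => h.2.1) ‹_› w
    (List.mem_append_left _ hw)

theorem ConvexIn.trans (hT : ConvexIn (inducedArcs A S) T) (hXT : X ⊆ T)
    (hX : ConvexIn (inducedArcs A T) X) : ConvexIn (inducedArcs A S) X := by
  refine ⟨hX.1, fun a b l ha hb hab hnd => hX.2 a b l ha hb ?_ hnd⟩
  have hmem : ∀ w ∈ a :: (l ++ [b]), w ∈ T := by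
    simp only [List.mem_cons, List.mem_append, List.not_mem_nil, or_false]
    rintro w (rfl | hw | rfl)
    exacts [hXT ha, hT.2 a b l (hXT ha) (hXT hb) hab hnd w hw, hXT hb]
  exact List.IsChain.imp_of_mem_imp (fun x y hx hy hxy => ⟨hmem x hx, hmem y hy, hxy.2.2⟩) hab

theorem convexIn_inducedArcs_sdiff_singleton
    (hz : IsSourceIn (inducedArcs A S) z ∨ IsSinkIn (inducedArcs A S) z)
    (hne : (S \ {z}).Nonempty) : ConvexIn (inducedArcs A S) (S \ {z}) := by
  refine ⟨hne, fun a b l ha hb hab _ => ?_⟩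
  rcases hz with hsrc | hsnk
  · have := List.IsChain.cons_induction (· ∈ S \ {z}) (l ++ [b]) hab
      (fun x y hxy _ => ⟨hxy.2.1, fun hyz => hsrc x (hyz ▸ hxy)⟩) ha
    exact fun w hw => this w (List.mem_append_left _ hw)
  · have := List.IsChain.backwards_concat_induction (· ∈ S \ {z}) (a :: l) hab
      (fun x y hxy _ => ⟨hxy.1, fun hxz => hsnk y (hxz ▸ hxy)⟩) hb
    exact fun w hw => this w (List.mem_cons_of_mem _ hw)

def IsRemovableIn (A : V → V → Prop) (S : Set V) (z : V) : Prop :=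
  z ∈ S ∧ (IsSourceIn (inducedArcs A S) z ∨ IsSinkIn (inducedArcs A S) z) ∧
    ConnectedIn A (S \ {z})

theorem ConnectedIn.nonempty (hS : ConnectedIn A S) : S.Nonempty :=
  Set.nonempty_coe_sort.1 (SimpleGraph.Connected.nonempty hS)

theorem ConnectedIn.exists_arc (hS : ConnectedIn A S) (hS2 : S.Nontrivial) (hz : z ∈ S) :
    ∃ u, inducedArcs A S z u ∨ inducedArcs A S u z := by
  have : Nontrivial S := hS2.coe_sort
  obtain ⟨u, hzu⟩ := hS.preconnected.exists_adj_of_nontrivial ⟨z, hz⟩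
  rcases ((SimpleGraph.fromRel_adj _ _ _).1 hzu).2 with h | h
  exacts [⟨u, .inl ⟨hz, u.2, h⟩⟩, ⟨u, .inr ⟨u.2, hz, h⟩⟩]

/-- `S \ ((S \ {d}) \ K)` is `K ∪ {d}`, written in the form to which
`SimpleGraph.connected_induce_sdiff_of_closed` applies. -/
theorem IsRemovableIn.of_component (hS : ConnectedIn A S) (hd : d ∈ S) (hdK : d ∉ K)
    (hK : ∀ x ∈ K, ∀ y ∈ S \ {d}, (SimpleGraph.fromRel A).Adj x y → y ∈ K) (hzK : z ∈ K)
    (hz : IsRemovableIn A (S \ ((S \ {d}) \ K)) z) : IsRemovableIn A S z := by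
  obtain ⟨hzT, hext, hT⟩ := hz
  have arcs_at_z : ∀ u, inducedArcs A S z u ∨ inducedArcs A S u z → u ∈ S \ ((S \ {d}) \ K) := by
    intro u hu
    have huS : u ∈ S := hu.elim (·.2.1) (·.1)
    refine ⟨huS, fun ⟨⟨_, hud⟩, huK⟩ => huK (hK z hzK u ⟨huS, hud⟩ ?_)⟩
    refine (SimpleGraph.fromRel_adj _ _ _).2 ⟨fun hzu => huK (hzu ▸ hzK), ?_⟩
    exact hu.imp (·.2.2) (·.2.2)
  refine ⟨hzT.1, hext.imp (fun h u hu => ?_) (fun h u hu => ?_), ?_⟩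
  · exact h u ⟨arcs_at_z u (.inr hu), hzT, hu.2.2⟩
  · exact h u ⟨hzT, arcs_at_z u (.inl hu), hu.2.2⟩
  have hSK : ConnectedIn A (S \ K) :=
    SimpleGraph.connected_induce_sdiff_of_closed hS hd hdK hK
  have hunion : S \ {z} = (S \ ((S \ {d}) \ K)) \ {z} ∪ S \ K := by
    ext x
    by_cases hx : x ∈ K <;> by_cases hxz : x = z <;> simp_all
  rw [ConnectedIn, hunion]
  refine SimpleGraph.induce_union_connected hT.preconnected hSK.preconnected ⟨d, ?_, hd, hdK⟩
  exact ⟨⟨hd, fun h => h.1.2 rfl⟩, fun hdz => hdK (hdz ▸ hzK)⟩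

theorem exists_isRemovableIn_ne [Finite V] (hA : AcyclicDigraph A) (hS : ConnectedIn A S)
    (hS2 : S.Nontrivial) (c : V) : ∃ z, z ≠ c ∧ IsRemovableIn A S z := by
  induction S using WellFoundedLT.induction generalizing c with
  | _ S ih =>
  by_cases hcut : ∀ d ∈ S, ConnectedIn A (S \ {d})
  · obtain ⟨s, hs, hsrc⟩ := hA.exists_isSourceIn hS.nonempty
    obtain ⟨t, ht, hsnk⟩ := hA.exists_isSinkIn hS.nonempty
    have hst : s ≠ t := by
      rintro rfl
      obtain ⟨u, hu | hu⟩ := hS.exists_arc hS2 hs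
      exacts [hsnk u hu, hsrc u hu]
    by_cases hsc : s = c
    · exact ⟨t, hsc ▸ hst.symm, ht, .inr hsnk, hcut t ht⟩
    · exact ⟨s, hsc, hs, .inl hsrc, hcut s hs⟩
  push Not at hcut
  obtain ⟨d, hd, hSd⟩ := hcut
  have hSd_ne : (S \ {d}).Nonempty := hS2.exists_ne d |>.imp fun _ ⟨hx, hxd⟩ => ⟨hx, hxd⟩
  obtain ⟨K, hKS, hK, hcK, ⟨k, hk⟩, ⟨b, hb⟩⟩ :=
    SimpleGraph.exists_closed_of_not_preconnected_induce
      (fun h => hSd ((SimpleGraph.connected_iff _).2 ⟨h, hSd_ne.coe_sort⟩)) c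
  have hdK : d ∉ K := fun h => (hKS h).2 rfl
  have hT : ConnectedIn A (S \ ((S \ {d}) \ K)) := by
    refine SimpleGraph.connected_induce_sdiff_of_closed hS hd (fun h => h.1.2 rfl) ?_
    exact fun x hx y hy hxy => ⟨hy, fun hyK => hx.2 (hK y hyK x hx.1 hxy.symm)⟩
  have hTS : S \ ((S \ {d}) \ K) ⊂ S := Set.sdiff_ssubset_left_iff.2 ⟨b, hb.1.1, hb⟩
  have hT2 : (S \ ((S \ {d}) \ K)).Nontrivial :=
    Set.nontrivial_of_mem_mem_ne ⟨hd, fun h => h.1.2 rfl⟩ ⟨(hKS hk).1, fun h => h.2 hk⟩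
      fun hdk => hdK (hdk ▸ hk)
  obtain ⟨z, hzd, hz⟩ := ih _ hTS hT hT2 d
  have hzK : z ∈ K := by
    by_contra h
    exact hz.1.2 ⟨⟨hz.1.1, hzd⟩, h⟩
  exact ⟨z, fun hzc => hcK (hzc ▸ hzK), hz.of_component hS hd hdK hK hzK⟩

def connectedConvexSubsets (A : V → V → Prop) (S : Set V) : Set (Set V) :=
  {X | X ⊆ S ∧ ConnectedIn A X ∧ ConvexIn (inducedArcs A S) X}

theorem connectedConvexSubsets_sdiff_singleton_subset (hz : IsRemovableIn A S z) :
    connectedConvexSubsets A (S \ {z}) ⊆ connectedConvexSubsets A S :=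
  fun _ ⟨hXS, hXconn, hXconv⟩ => ⟨hXS.trans Set.sdiff_subset, hXconn,
    (convexIn_inducedArcs_sdiff_singleton hz.2.1 hz.2.2.nonempty).trans hXS hXconv⟩

theorem exists_mem_connectedConvexSubsets_ncard_eq [Finite V] (hA : AcyclicDigraph A)
    (hS : ConnectedIn A S) (hz : z ∈ S) {k : ℕ} (hk : 1 ≤ k) (hkS : k ≤ S.ncard) :
    ∃ X ∈ connectedConvexSubsets A S, z ∈ X ∧ X.ncard = k := by
  induction S using WellFoundedLT.induction with
  | _ S ih =>
  rcases hkS.eq_or_lt with rfl | hkS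
  · exact ⟨S, ⟨subset_rfl, hS, convexIn_inducedArcs_self hS.nonempty⟩, hz, rfl⟩
  obtain ⟨v, hvz, hv⟩ :=
    exists_isRemovableIn_ne hA hS (Set.one_lt_ncard_iff_nontrivial.1 (by omega)) z
  obtain ⟨X, hX, hzX, hXk⟩ := ih (S \ {v}) (Set.sdiff_singleton_ssubset.2 hv.1) hv.2.2
    ⟨hz, hvz.symm⟩ (by rw [Set.ncard_sdiff_singleton_of_mem hv.1]; omega)
  exact ⟨X, connectedConvexSubsets_sdiff_singleton_subset hv hX, hzX, hXk⟩

theorem ncard_le_ncard_connectedConvexSubsets_of_mem [Finite V] (hA : AcyclicDigraph A)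
    (hS : ConnectedIn A S) (hz : z ∈ S) :
    S.ncard ≤ {X ∈ connectedConvexSubsets A S | z ∈ X}.ncard := by
  calc S.ncard = (Set.Icc 1 S.ncard).ncard := by simp
    _ ≤ (Set.ncard '' {X ∈ connectedConvexSubsets A S | z ∈ X}).ncard := by
      refine Set.ncard_le_ncard (fun k ⟨hk, hkS⟩ => ?_)
      obtain ⟨X, hX, hzX, hXk⟩ := exists_mem_connectedConvexSubsets_ncard_eq hA hS hz hk hkS
      exact ⟨X, ⟨hX, hzX⟩, hXk⟩
    _ ≤ _ := Set.ncard_image_le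

theorem ncard_mul_succ_le_two_mul_ncard_connectedConvexSubsets [Finite V]
    (hA : AcyclicDigraph A) (hS : ConnectedIn A S) :
    S.ncard * (S.ncard + 1) ≤ 2 * (connectedConvexSubsets A S).ncard := by
  induction S using WellFoundedLT.induction with
  | _ S ih =>
  have hSS : S ∈ connectedConvexSubsets A S :=
    ⟨subset_rfl, hS, convexIn_inducedArcs_self hS.nonempty⟩
  rcases S.subsingleton_or_nontrivial with hS1 | hS2
  · have : S.ncard ≤ 1 := Set.ncard_le_one_iff_subsingleton.2 hS1
    have : 1 ≤ (connectedConvexSubsets A S).ncard := (Set.ncard_pos).2 ⟨S, hSS⟩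
    interval_cases S.ncard <;> omega
  obtain ⟨c, -⟩ := hS.nonempty
  obtain ⟨z, -, hz⟩ := exists_isRemovableIn_ne hA hS hS2 c
  have hdisj : Disjoint (connectedConvexSubsets A (S \ {z}))
      {X ∈ connectedConvexSubsets A S | z ∈ X} :=
    Set.disjoint_left.2 fun X hX hzX => (hX.1 hzX.2).2 rfl
  have hunion : connectedConvexSubsets A (S \ {z}) ∪ {X ∈ connectedConvexSubsets A S | z ∈ X} ⊆
      connectedConvexSubsets A S :=
    Set.union_subset (connectedConvexSubsets_sdiff_singleton_subset hz) fun _ hX => hX.1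
  have hcount := Set.ncard_le_ncard hunion
  rw [Set.ncard_union_eq hdisj] at hcount
  have hIH := ih _ (Set.sdiff_singleton_ssubset.2 hz.1) hz.2.2
  have hnew := ncard_le_ncard_connectedConvexSubsets_of_mem hA hS hz.1
  rw [← Set.ncard_sdiff_singleton_add_one hz.1] at hnew ⊢
  nlinarith

theorem connectedIn_univ_iff : ConnectedIn A Set.univ ↔ DigraphConnected A :=
  (SimpleGraph.induceUnivIso _).connected_iff

theorem connectedConvexSubsets_univ (A : V → V → Prop) :
    connectedConvexSubsets A Set.univ = {X | ConnectedIn A X ∧ ConvexIn A X} := by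
  simp [connectedConvexSubsets, inducedArcs_univ]

end

/-- Every connected acyclic digraph of order `n` has at least `n(n+1)/2`
connected convex sets. -/
theorem stmt_4 {V : Type*} [Fintype V] (A : V → V → Prop)
    (hconn : DigraphConnected A) (hacyc : AcyclicDigraph A) :
    Fintype.card V * (Fintype.card V + 1) / 2 ≤
      {X : Set V | ConnectedIn A X ∧ ConvexIn A X}.ncard := by
  have h := ncard_mul_succ_le_two_mul_ncard_connectedConvexSubsets hacyc
    (connectedIn_univ_iff.2 hconn)
  rw [Set.ncard_univ, Nat.card_eq_fintype_card, connectedConvexSubsets_univ] at h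
  exact Nat.div_le_of_le_mul h
end

section
/- Let D be a connected acyclic digraph of order n and let v be any vertex of D. Then for every k with 1 ≤ k ≤ n there exists a connected convex set of D of size k containing v. -/
/-!
Digraphs are given by an arc relation `A : V → V → Prop` on a vertex type `V`.
A directed path from `a` to `b` is encoded as `a :: (l ++ [b])` where the list
satisfies `List.Chain A` (consecutive arcs) and `List.Nodup` (distinct vertices);
`l` is the list of internal vertices.
-/

variable {V : Type*}

/-!
Grow the set one vertex at a time. As `D` is connected, some arc joins `X` to its
complement; say it leaves `X` (otherwise reverse all arcs). Among the vertices outside `X`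
reachable from `X`, pick one, `u`, that is minimal for reachability, which is possible as `D`
is finite and acyclic. Then `u` has an in-neighbour in `X`, so `X ∪ {u}` stays connected, and
it stays convex: a walk from `u` back into `X` extends to a walk leaving and re-entering `X`,
while a walk from `X` to `u` through an outside vertex contradicts minimality.
-/

open Relation

section
variable {A : V → V → Prop}

/-- Convexity with respect to directed walks instead of paths; it implies `ConvexIn`. -/
def ReachConvex (A : V → V → Prop) (X : Set V) : Prop :=
  ∀ ⦃a⦄, a ∈ X → ∀ ⦃b⦄, b ∈ X → ∀ ⦃w⦄, TransGen A a w → TransGen A w b → w ∈ X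

theorem List.IsChain.transGen_of_pair_sublist {l : List V} (hl : l.IsChain A) {a b : V}
    (h : [a, b].Sublist l) : TransGen A a b :=
  List.isChain_pair.1 ((hl.imp fun _ _ => TransGen.single).sublist h)

theorem ReachConvex.convexIn {X : Set V} (hX : ReachConvex A X) (hne : X.Nonempty) :
    ConvexIn A X := by
  refine ⟨hne, fun a b l ha hb hpath _ w hw => hX ha hb ?_ ?_⟩
  · exact hpath.transGen_of_pair_sublist
      ((List.singleton_sublist.2 (List.mem_append_left _ hw)).cons_cons a)
  · exact hpath.transGen_of_pair_sublist
      (((List.singleton_sublist.2 hw).append (List.Sublist.refl [b])).cons a)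

theorem AcyclicDigraph.reachConvex_singleton (hA : AcyclicDigraph A) (v : V) :
    ReachConvex A {v} := by
  intro a ha b hb w haw hwb
  rw [Set.mem_singleton_iff] at ha hb
  subst ha hb
  exact absurd (haw.trans hwb) (hA _)

theorem AcyclicDigraph.flip (hA : AcyclicDigraph A) : AcyclicDigraph (flip A) :=
  fun v h => hA v (transGen_swap.1 h)

theorem ReachConvex.flip {X : Set V} (hX : ReachConvex A X) : ReachConvex (flip A) X :=
  fun _ ha _ hb _ haw hwb => hX hb ha (transGen_swap.1 hwb) (transGen_swap.1 haw)

theorem AcyclicDigraph.wellFounded [Finite V] (hA : AcyclicDigraph A) :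
    WellFounded (TransGen A) :=
  have : Std.Irrefl (TransGen A) := ⟨hA⟩
  Finite.wellFounded_of_trans_of_irrefl _

theorem ReachConvex.exists_insert_of_arc [Finite V] (hA : AcyclicDigraph A) {X : Set V}
    (hX : ReachConvex A X) {x u : V} (hx : x ∈ X) (hu : u ∉ X) (hxu : A x u) :
    ∃ u₀ ∉ X, ∃ x₀ ∈ X, A x₀ u₀ ∧ ReachConvex A (insert u₀ X) := by
  set T : Set V := {t | t ∉ X ∧ ∃ y ∈ X, TransGen A y t}
  obtain ⟨u₀, ⟨hu₀, y, hy, hyu₀⟩, hmin⟩ :=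
    hA.wellFounded.has_min T ⟨u, hu, x, hx, TransGen.single hxu⟩
  have hbetween : ∀ ⦃a⦄, a ∈ X → ∀ ⦃w⦄, TransGen A a w → TransGen A w u₀ → w ∈ X :=
    fun a ha w haw hwu₀ => by_contra fun hw => hmin w ⟨hw, a, ha, haw⟩ hwu₀
  obtain ⟨x₀, hx₀, hx₀u₀⟩ : ∃ x₀ ∈ X, A x₀ u₀ := by
    obtain ⟨z, hyz, hzu₀⟩ := TransGen.tail'_iff.1 hyu₀
    rcases reflTransGen_iff_eq_or_transGen.1 hyz with rfl | hyz
    · exact ⟨_, hy, hzu₀⟩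
    · exact ⟨z, hbetween hy hyz (TransGen.single hzu₀), hzu₀⟩
  refine ⟨u₀, hu₀, x₀, hx₀, hx₀u₀, ?_⟩
  rintro a (rfl | ha) b (rfl | hb) w haw hwb
  · exact absurd (haw.trans hwb) (hA _)
  · exact Set.mem_insert_of_mem _ (hX hx₀ hb (TransGen.head hx₀u₀ haw) hwb)
  · exact Set.mem_insert_of_mem _ (hbetween ha haw hwb)
  · exact Set.mem_insert_of_mem _ (hX ha hb haw hwb)

theorem ReachConvex.exists_insert_of_adj [Finite V] (hA : AcyclicDigraph A) {X : Set V}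
    (hX : ReachConvex A X) {x u : V} (hx : x ∈ X) (hu : u ∉ X)
    (hxu : (SimpleGraph.fromRel A).Adj x u) :
    ∃ u₀ ∉ X, ∃ x₀ ∈ X, (SimpleGraph.fromRel A).Adj x₀ u₀ ∧ ReachConvex A (insert u₀ X) := by
  have adj_of_arc : ∀ {x₀ u₀}, x₀ ∈ X → u₀ ∉ X → A x₀ u₀ ∨ A u₀ x₀ →
      (SimpleGraph.fromRel A).Adj x₀ u₀ :=
    fun hx₀ hu₀ h => (SimpleGraph.fromRel_adj _ _ _).2 ⟨fun he => hu₀ (he ▸ hx₀), h⟩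
  rcases ((SimpleGraph.fromRel_adj _ _ _).1 hxu).2 with hxu | hux
  · obtain ⟨u₀, hu₀, x₀, hx₀, harc, hconv⟩ := hX.exists_insert_of_arc hA hx hu hxu
    exact ⟨u₀, hu₀, x₀, hx₀, adj_of_arc hx₀ hu₀ (.inl harc), hconv⟩
  · obtain ⟨u₀, hu₀, x₀, hx₀, harc, hconv⟩ := hX.flip.exists_insert_of_arc hA.flip hx hu hux
    exact ⟨u₀, hu₀, x₀, hx₀, adj_of_arc hx₀ hu₀ (.inr harc), hconv.flip⟩

theorem ConnectedIn.insert {X : Set V} (hX : ConnectedIn A X) {x u : V} (hx : x ∈ X)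
    (hxu : (SimpleGraph.fromRel A).Adj x u) : ConnectedIn A (insert u X) := by
  have hu : ((SimpleGraph.fromRel A).induce {u}).Preconnected := by
    rw [SimpleGraph.induce_singleton_eq_top]
    exact SimpleGraph.connected_top.preconnected
  rw [ConnectedIn, ← Set.union_singleton]
  exact SimpleGraph.connected_induce_union hX.preconnected hu hx rfl hxu

theorem exists_connectedIn_reachConvex_insert [Finite V] (hconn : DigraphConnected A)
    (hA : AcyclicDigraph A) {X : Set V} (hXconn : ConnectedIn A X) (hXconv : ReachConvex A X)
    {v y : V} (hv : v ∈ X) (hy : y ∉ X) :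
    ∃ u ∉ X, ConnectedIn A (insert u X) ∧ ReachConvex A (insert u X) := by
  obtain ⟨d, -, hd₁, hd₂⟩ := (hconn.preconnected v y).some.exists_boundary_dart X hv hy
  obtain ⟨u, hu, x, hx, hxu, hconv⟩ := hXconv.exists_insert_of_adj hA hd₁ hd₂ d.adj
  exact ⟨u, hu, hXconn.insert hx hxu, hconv⟩

theorem exists_connectedIn_reachConvex_ncard [Finite V] (hconn : DigraphConnected A)
    (hA : AcyclicDigraph A) (v : V) {k : ℕ} (hk1 : 1 ≤ k) (hkn : k ≤ Nat.card V) :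
    ∃ X : Set V, v ∈ X ∧ ConnectedIn A X ∧ ReachConvex A X ∧ X.ncard = k := by
  induction k, hk1 using Nat.le_induction with
  | base =>
    refine ⟨{v}, rfl, ?_, hA.reachConvex_singleton v, Set.ncard_singleton v⟩
    rw [ConnectedIn, SimpleGraph.induce_singleton_eq_top]
    exact SimpleGraph.connected_top
  | succ k _ ih =>
    obtain ⟨X, hv, hXconn, hXconv, rfl⟩ := ih (by omega)
    obtain ⟨y, hy⟩ : ∃ y, y ∉ X := by
      by_contra! h
      rw [Set.eq_univ_of_forall h, Set.ncard_univ] at hkn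
      omega
    obtain ⟨u, hu, hconn', hconv'⟩ :=
      exists_connectedIn_reachConvex_insert hconn hA hXconn hXconv hv hy
    exact ⟨insert u X, Set.mem_insert_of_mem _ hv, hconn', hconv', Set.ncard_insert_of_notMem hu⟩

end

/-- In a connected acyclic digraph of order `n`, every vertex lies in a
connected convex set of size `k`, for every `1 ≤ k ≤ n`. -/
theorem stmt_7 {V : Type*} [Fintype V] (A : V → V → Prop)
    (hconn : DigraphConnected A) (hacyc : AcyclicDigraph A)
    (v : V) (k : ℕ) (hk1 : 1 ≤ k) (hkn : k ≤ Fintype.card V) :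
    ∃ X : Set V, v ∈ X ∧ ConnectedIn A X ∧ ConvexIn A X ∧ X.ncard = k := by
  obtain ⟨X, hv, hXconn, hXconv, hcard⟩ :=
    exists_connectedIn_reachConvex_ncard hconn hacyc v hk1 (by rwa [Nat.card_eq_fintype_card])
  exact ⟨X, hv, hXconn, hXconv.convexIn ⟨v, hv⟩, hcard⟩
end

section
/- Let D be a connected acyclic digraph and let H be a convex set of D. If u ∈ H, v ∉ H, the arc u→v exists, P is a directed path of maximum length whose initial vertex is in H, whose terminal vertex is v, and all of whose other vertices lie outside H, and w is the second vertex of P, then H ∪ {w} is convex in D; moreover if H is connected then H ∪ {w} is connected. -/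
/-!
Digraphs are given by an arc relation `A : V → V → Prop` on a vertex type `V`.
A directed path from `a` to `b` is encoded as `a :: (l ++ [b])` where the list
satisfies `List.Chain A` (consecutive arcs) and `List.Nodup` (distinct vertices);
`l` is the list of internal vertices.
-/

variable {V : Type*}

/-!
Write `P = y → w → ⋯ → v`. In an acyclic digraph every directed walk is a path. A walk from
`a ∈ H` to `w` whose interior avoids `H` can be followed by the rest of `P`; the result avoids
`H` (acyclicity keeps it a path), so by maximality of `P` the walk is a single arc. Splitting an
arbitrary walk from `H` to `w` at its vertices in `H` and using convexity of `H` on the pieces,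
all its interior vertices lie in `H`. No walk leaves `w` and returns to `H`, since prefixing
the arc `y → w` would give a walk from `H` to `H` through `w ∉ H`, and none returns to `w`
by acyclicity. Connectedness is preserved because `y ∈ H` is adjacent to `w`.
-/

theorem List.IsChain.pairwise_transGen {A : V → V → Prop} {l : List V} (h : l.IsChain A) :
    l.Pairwise (Relation.TransGen A) :=
  (h.imp fun _ _ => Relation.TransGen.single).pairwise

theorem AcyclicDigraph.nodup_of_isChain {A : V → V → Prop} (hacyc : AcyclicDigraph A)
    {l : List V} (h : l.IsChain A) : l.Nodup :=
  haveI : Std.Irrefl (Relation.TransGen A) := ⟨hacyc⟩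
  h.pairwise_transGen.nodup

theorem AcyclicDigraph.mem_of_isChain_of_avoiding_eq_nil {A : V → V → Prop} {H : Set V} {w : V}
    (hacyc : AcyclicDigraph A) (hH : ConvexIn A H)
    (havoid : ∀ a l, a ∈ H → (a :: (l ++ [w])).IsChain A → (∀ z ∈ l, z ∉ H) → l = []) :
    ∀ l a, a ∈ H → (a :: (l ++ [w])).IsChain A → ∀ x ∈ l, x ∈ H := by
  intro l
  induction l with
  | nil => simp
  | cons c t ih =>
    intro a ha hchain
    have hc : c ∈ H := by
      by_contra hc
      by_cases hz : ∃ z ∈ t, z ∈ H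
      · obtain ⟨z, hzt, hzH⟩ := hz
        obtain ⟨s, r, rfl⟩ := List.append_of_mem hzt
        rw [show c :: (s ++ z :: r) ++ [w] = (c :: s) ++ z :: (r ++ [w]) by simp] at hchain
        have hpre := (List.isChain_cons_split.1 hchain).1
        exact hc (hH.2 a z (c :: s) ha hzH hpre (hacyc.nodup_of_isChain hpre) c (by simp))
      · push Not at hz
        exact List.cons_ne_nil c t <| havoid a (c :: t) ha hchain
          (by simpa only [List.forall_mem_cons] using ⟨hc, hz⟩)
    simpa only [List.forall_mem_cons] using ⟨hc, ih c hc hchain.tail⟩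

theorem AcyclicDigraph.eq_nil_of_isChain_of_longest {A : V → V → Prop} {H : Set V} {v w : V}
    {m : List V} (hacyc : AcyclicDigraph A) (hwm : (w :: m).IsChain A)
    (hterm : (w :: m).getLast? = some v) (hout : ∀ x ∈ w :: m, x ∉ H)
    (hmax : ∀ (y' : V) (m' : List V), y' ∈ H → (y' :: m').IsChain A →
      (y' :: m').Nodup → m'.getLast? = some v → (∀ x ∈ m', x ∉ H) →
      m'.length ≤ (w :: m).length) :
    ∀ a l, a ∈ H → (a :: (l ++ [w])).IsChain A → (∀ z ∈ l, z ∉ H) → l = [] := by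
  intro a l ha hchain hl
  have hext : (a :: (l ++ w :: m)).IsChain A := List.isChain_cons_split.2 ⟨hchain, hwm⟩
  have hlen := hmax a (l ++ w :: m) ha hext (hacyc.nodup_of_isChain hext)
    (by simp [List.getLast?_append, hterm])
    (fun x hx => (List.mem_append.1 hx).elim (hl x) (hout x))
  simpa using hlen

theorem AcyclicDigraph.convexIn_union_singleton {A : V → V → Prop} {H : Set V} {y w : V}
    (hacyc : AcyclicDigraph A) (hH : ConvexIn A H) (hy : y ∈ H) (hyw : A y w) (hw : w ∉ H)
    (havoid : ∀ a l, a ∈ H → (a :: (l ++ [w])).IsChain A → (∀ z ∈ l, z ∉ H) → l = []) :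
    ConvexIn A (H ∪ {w}) := by
  refine ⟨⟨y, Or.inl hy⟩, ?_⟩
  rintro a b l (ha | rfl) (hb | rfl) hchain - x hx
  · exact Or.inl (hH.2 a b l ha hb hchain (hacyc.nodup_of_isChain hchain) x hx)
  · exact Or.inl (hacyc.mem_of_isChain_of_avoiding_eq_nil hH havoid l a ha hchain x hx)
  · have hchain' : (y :: ((a :: l) ++ [b])).IsChain A := List.IsChain.cons_cons hyw hchain
    exact absurd (hH.2 y b (a :: l) hy hb hchain' (hacyc.nodup_of_isChain hchain') a (by simp)) hw
  · exact absurd (hacyc.nodup_of_isChain hchain) (by simp)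

theorem ConnectedIn.union_singleton {A : V → V → Prop} {H : Set V} {y w : V}
    (hH : ConnectedIn A H) (hy : y ∈ H) (hyw : A y w) (hw : w ∉ H) :
    ConnectedIn A (H ∪ {w}) :=
  SimpleGraph.connected_induce_union hH.preconnected .of_subsingleton hy rfl
    ⟨fun h => hw (h ▸ hy), Or.inl hyw⟩

theorem stmt_18_general {V : Type*} (A : V → V → Prop)
    (hacyc : AcyclicDigraph A)
    (H : Set V) (hHx : ConvexIn A H)
    (v : V) (y w : V) (m : List V)
    (hchain : List.Chain A y (w :: m))
    (hy : y ∈ H)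
    (hterm : (w :: m).getLast? = some v)
    (hout : ∀ x ∈ w :: m, x ∉ H)
    (hmax : ∀ (y' : V) (m' : List V), y' ∈ H → List.Chain A y' m' →
      (y' :: m').Nodup → m'.getLast? = some v → (∀ x ∈ m', x ∉ H) →
      m'.length ≤ (w :: m).length) :
    ConvexIn A (H ∪ {w}) ∧ (ConnectedIn A H → ConnectedIn A (H ∪ {w})) := by
  obtain ⟨hyw, hwm⟩ := List.isChain_cons_cons.1 hchain
  have hw : w ∉ H := hout w List.mem_cons_self
  have havoid := hacyc.eq_nil_of_isChain_of_longest hwm hterm hout hmax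
  exact ⟨hacyc.convexIn_union_singleton hHx hy hyw hw havoid,
    fun hHc => hHc.union_singleton hy hyw hw⟩

/-- Extension lemma: if `u ∈ H`, `v ∉ H`, `u → v` is an arc, and
`P = y :: w :: m` is a longest directed path with initial vertex `y ∈ H`,
terminal vertex `v`, and all other vertices outside `H`, then `H ∪ {w}` is
convex, and connected whenever `H` is connected. -/
theorem stmt_18 {V : Type*} [Fintype V] (A : V → V → Prop)
    (hconn : DigraphConnected A) (hacyc : AcyclicDigraph A)
    (H : Set V) (hHx : ConvexIn A H)
    (u v : V) (hu : u ∈ H) (hv : v ∉ H) (huv : A u v)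
    (y w : V) (m : List V)
    (hchain : List.Chain A y (w :: m))
    (hnodup : (y :: w :: m).Nodup)
    (hy : y ∈ H)
    (hterm : (w :: m).getLast? = some v)
    (hout : ∀ x ∈ w :: m, x ∉ H)
    (hmax : ∀ (y' : V) (m' : List V), y' ∈ H → List.Chain A y' m' →
      (y' :: m').Nodup → m'.getLast? = some v → (∀ x ∈ m', x ∉ H) →
      m'.length ≤ (w :: m).length) :
    ConvexIn A (H ∪ {w}) ∧ (ConnectedIn A H → ConnectedIn A (H ∪ {w})) :=
  stmt_18_general A hacyc H hHx v y w m hchain hy hterm hout hmax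
end
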